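/- Let α be a Borel probability measure on L²((0,1]²), let y ∈ L²((0,1]²), and let ρ > 0 be such that α({ z ∈ L²((0,1]²) : ‖z − y‖ = ρ }) = 0. For each integer k ≥ 1 set d_k := 2^{2k}, let Φ_{d_k} : L²((0,1]²) → ℝ^{d_k} be the block-averaging discretisation at resolution d_k, let α_{d_k} := α ∘ Φ_{d_k}^{−1} and y_{d_k} := Φ_{d_k}(y). Then lim_{k→∞} α_{d_k}( B(y_{d_k}, √(d_k)·ρ) ) = α( B_{L²}(y, ρ) ). -/

import Mathlib

open MeasureTheory Filter

open scoped ENNReal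

/-- Lebesgue measure on the unit square `(0,1]²`. -/
noncomputable def unitSquareMeasure : Measure (ℝ × ℝ) :=
  (volume : Measure (ℝ × ℝ)).restrict (Set.Ioc 0 1 ×ˢ Set.Ioc 0 1)

/-- The dyadic square `(i/2^k, (i+1)/2^k] × (j/2^k, (j+1)/2^k]`. -/
def dyadicSquare (k : ℕ) (i j : Fin (2 ^ k)) : Set (ℝ × ℝ) :=
  Set.Ioc ((i : ℝ) / 2 ^ k) (((i : ℝ) + 1) / 2 ^ k) ×ˢ
    Set.Ioc ((j : ℝ) / 2 ^ k) (((j : ℝ) + 1) / 2 ^ k)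

/-- The block-averaging discretisation `Φ_d : L²((0,1]²) → ℝ^d`, `d = 2^{2k}`. -/
noncomputable def blockAvg (k : ℕ) (f : Lp ℝ 2 unitSquareMeasure) :
    EuclideanSpace ℝ (Fin (2 ^ k) × Fin (2 ^ k)) :=
  (EuclideanSpace.equiv (Fin (2 ^ k) × Fin (2 ^ k)) ℝ).symm
    fun p => 2 ^ (2 * k) * ∫ q in dyadicSquare k p.1 p.2, f q ∂unitSquareMeasure

/-! The entries of `blockAvg k f` are the means `E_Q f` of `f` over the `4^k` dyadic squares `Q`
of side `2^{-k}`, so `(2^{-k}‖blockAvg k f‖)² = ∑_Q |Q| (E_Q f)² = ‖f‖² - ∑_Q |Q| Var_Q f`.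
Hence `f ↦ 2^{-k}‖blockAvg k f‖` is a 1-Lipschitz family bounded by `‖f‖`; for `f` continuous on the
closed square all the variances are uniformly small, so `2^{-k}‖blockAvg k f‖ → ‖f‖`, and by
equicontinuity and density of continuous functions this convergence holds on all of `L²`.
Since `blockAvg k z` lies in the blown-up ball iff `2^{-k}‖blockAvg k (z - y)‖ ≤ ρ`, the event
eventually agrees with `‖z - y‖ ≤ ρ` off the sphere, and dominated convergence concludes. -/

open Set Function ProbabilityTheory Topology

local notation "μ□" => unitSquareMeasure

lemma mem_Ioc_div_two_pow_iff {x : ℝ} {k i : ℕ} :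
    x ∈ Ioc ((i : ℝ) / 2 ^ k) (((i : ℝ) + 1) / 2 ^ k) ↔ ⌈x * 2 ^ k⌉₊ = i + 1 := by
  rw [Nat.ceil_eq_iff (Nat.succ_ne_zero i), mem_Ioc, div_lt_iff₀ (by positivity),
    le_div_iff₀ (by positivity)]
  push_cast
  simp

lemma add_one_div_two_pow_sub_div (m : ℝ) (k : ℕ) :
    (m + 1) / 2 ^ k - m / 2 ^ k = (2 ^ k)⁻¹ := by
  field_simp; ring

lemma measurableSet_dyadicSquare (k : ℕ) (i j : Fin (2 ^ k)) :
    MeasurableSet (dyadicSquare k i j) :=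
  measurableSet_Ioc.prod measurableSet_Ioc

lemma dyadicSquare_subset (k : ℕ) (i j : Fin (2 ^ k)) :
    dyadicSquare k i j ⊆ Ioc 0 1 ×ˢ Ioc 0 1 := by
  have hIoc (i : Fin (2 ^ k)) : Ioc ((i : ℝ) / 2 ^ k) (((i : ℝ) + 1) / 2 ^ k) ⊆ Ioc 0 1 := by
    refine Ioc_subset_Ioc (by positivity) ((div_le_one (by positivity)).2 ?_)
    exact_mod_cast i.is_lt
  exact prod_mono (hIoc i) (hIoc j)

lemma pairwise_disjoint_dyadicSquare (k : ℕ) :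
    Pairwise (Disjoint on fun p : Fin (2 ^ k) × Fin (2 ^ k) => dyadicSquare k p.1 p.2) := by
  refine fun p q hpq => disjoint_left.2 fun x (hp : x ∈ dyadicSquare k p.1 p.2)
    (hq : x ∈ dyadicSquare k q.1 q.2) => hpq ?_
  rw [dyadicSquare, mem_prod, mem_Ioc_div_two_pow_iff, mem_Ioc_div_two_pow_iff] at hp hq
  ext <;> omega

lemma iUnion_dyadicSquare (k : ℕ) :
    ⋃ p : Fin (2 ^ k) × Fin (2 ^ k), dyadicSquare k p.1 p.2 = Ioc 0 1 ×ˢ Ioc 0 1 := by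
  refine Subset.antisymm (iUnion_subset fun p => dyadicSquare_subset k p.1 p.2) fun x hx => ?_
  have hindex {u : ℝ} (hu : u ∈ Ioc (0 : ℝ) 1) :
      ∃ i : Fin (2 ^ k), ⌈u * 2 ^ k⌉₊ = (i : ℕ) + 1 := by
    have hpos : 0 < ⌈u * 2 ^ k⌉₊ := Nat.ceil_pos.2 (by have := hu.1; positivity)
    have hle : ⌈u * 2 ^ k⌉₊ ≤ 2 ^ k :=
      Nat.ceil_le.2 (by push_cast; exact mul_le_of_le_one_left (by positivity) hu.2)
    exact ⟨⟨⌈u * 2 ^ k⌉₊ - 1, by omega⟩, by simp only; omega⟩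
  obtain ⟨i, hi⟩ := hindex hx.1
  obtain ⟨j, hj⟩ := hindex hx.2
  exact mem_iUnion.2 ⟨(i, j), mem_Ioc_div_two_pow_iff.2 hi, mem_Ioc_div_two_pow_iff.2 hj⟩

lemma dist_le_of_mem_dyadicSquare {k : ℕ} {i j : Fin (2 ^ k)} {x x' : ℝ × ℝ}
    (hx : x ∈ dyadicSquare k i j) (hx' : x' ∈ dyadicSquare k i j) :
    dist x x' ≤ (2 ^ k)⁻¹ := by
  rw [Prod.dist_eq, max_le_iff]
  exact ⟨(Real.dist_le_of_mem_Icc (Ioc_subset_Icc_self hx.1)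
      (Ioc_subset_Icc_self hx'.1)).trans_eq (add_one_div_two_pow_sub_div _ k),
    (Real.dist_le_of_mem_Icc (Ioc_subset_Icc_self hx.2)
      (Ioc_subset_Icc_self hx'.2)).trans_eq (add_one_div_two_pow_sub_div _ k)⟩

lemma unitSquareMeasure_dyadicSquare (k : ℕ) (i j : Fin (2 ^ k)) :
    μ□ (dyadicSquare k i j) = (4 ^ k)⁻¹ := by
  rw [unitSquareMeasure, Measure.restrict_apply (measurableSet_dyadicSquare k i j),
    inter_eq_left.2 (dyadicSquare_subset k i j), dyadicSquare, Measure.volume_eq_prod,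
    Measure.prod_prod, Real.volume_Ioc, Real.volume_Ioc, add_one_div_two_pow_sub_div,
    add_one_div_two_pow_sub_div, ← ENNReal.ofReal_mul (by positivity), ← mul_inv, ← mul_pow,
    ENNReal.ofReal_inv_of_pos (by positivity), ENNReal.ofReal_pow (by norm_num)]
  norm_num

instance : IsFiniteMeasure μ□ := by
  rw [unitSquareMeasure]
  exact isFiniteMeasure_restrict.2 (by simp [Measure.volume_eq_prod, Measure.prod_prod])

lemma unitSquareMeasure_dyadicSquare_ne_zero (k : ℕ) (i j : Fin (2 ^ k)) :
    μ□ (dyadicSquare k i j) ≠ 0 := by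
  simp [unitSquareMeasure_dyadicSquare]

instance (k : ℕ) (i j : Fin (2 ^ k)) : IsProbabilityMeasure μ□[|dyadicSquare k i j] :=
  cond_isProbabilityMeasure (unitSquareMeasure_dyadicSquare_ne_zero k i j)

lemma integral_cond_dyadicSquare (k : ℕ) (i j : Fin (2 ^ k)) (h : ℝ × ℝ → ℝ) :
    ∫ x, h x ∂μ□[|dyadicSquare k i j] = 4 ^ k * ∫ x in dyadicSquare k i j, h x ∂μ□ := by
  rw [ProbabilityTheory.cond, integral_smul_measure, unitSquareMeasure_dyadicSquare, inv_inv,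
    smul_eq_mul]
  simp

lemma blockAvg_apply (k : ℕ) (f : Lp ℝ 2 μ□) (p : Fin (2 ^ k) × Fin (2 ^ k)) :
    blockAvg k f p = ∫ x, f x ∂μ□[|dyadicSquare k p.1 p.2] := by
  rw [integral_cond_dyadicSquare]
  show 2 ^ (2 * k) * _ = _
  norm_num [pow_mul]

lemma integral_eq_sum_integral_cond_dyadicSquare (k : ℕ) {h : ℝ × ℝ → ℝ}
    (hh : Integrable h μ□) :
    ∫ x, h x ∂μ□ = (4 ^ k)⁻¹ * ∑ p : Fin (2 ^ k) × Fin (2 ^ k),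
      ∫ x, h x ∂μ□[|dyadicSquare k p.1 p.2] := by
  have hμ : μ□.restrict (⋃ p : Fin (2 ^ k) × Fin (2 ^ k), dyadicSquare k p.1 p.2) = μ□ := by
    rw [iUnion_dyadicSquare, unitSquareMeasure, Measure.restrict_restrict_of_subset subset_rfl]
  simp only [integral_cond_dyadicSquare, ← Finset.mul_sum,
    inv_mul_cancel_left₀ (by positivity : (4 : ℝ) ^ k ≠ 0)]
  conv_lhs => rw [← hμ]
  exact integral_iUnion_fintype (fun p => measurableSet_dyadicSquare k p.1 p.2)
    (pairwise_disjoint_dyadicSquare k) fun _ => hh.integrableOn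

lemma memLp_cond_dyadicSquare (k : ℕ) (i j : Fin (2 ^ k)) (f : Lp ℝ 2 μ□) :
    MemLp f 2 μ□[|dyadicSquare k i j] :=
  ((Lp.memLp f).restrict _).smul_measure (by simp [unitSquareMeasure_dyadicSquare_ne_zero])

theorem MeasureTheory.Lp.norm_sq_eq_integral_sq {α : Type*} [MeasurableSpace α] {μ : Measure α}
    (f : Lp ℝ 2 μ) : ‖f‖ ^ 2 = ∫ x, f x ^ 2 ∂μ := by
  rw [← real_inner_self_eq_norm_sq, L2.inner_def]
  simp [sq]

lemma norm_sq_eq_norm_blockAvg_add_sum_variance (k : ℕ) (f : Lp ℝ 2 μ□) :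
    ‖f‖ ^ 2 = ((2 ^ k)⁻¹ * ‖blockAvg k f‖) ^ 2
      + (4 ^ k)⁻¹ * ∑ p : Fin (2 ^ k) × Fin (2 ^ k), Var[f; μ□[|dyadicSquare k p.1 p.2]] := by
  have hmean (p : Fin (2 ^ k) × Fin (2 ^ k)) :
      ∫ x, f x ^ 2 ∂μ□[|dyadicSquare k p.1 p.2]
        = Var[f; μ□[|dyadicSquare k p.1 p.2]] + blockAvg k f p ^ 2 := by
    rw [variance_eq_sub (memLp_cond_dyadicSquare k p.1 p.2 f), blockAvg_apply]
    simp only [Pi.pow_apply]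
    ring
  rw [Lp.norm_sq_eq_integral_sq,
    integral_eq_sum_integral_cond_dyadicSquare k (Lp.memLp f).integrable_sq,
    mul_pow, EuclideanSpace.norm_sq_eq, inv_pow, ← pow_mul, mul_comm k 2, pow_mul]
  simp only [hmean, Finset.sum_add_distrib, Real.norm_eq_abs, sq_abs]
  norm_num
  ring

lemma blockAvg_sub (k : ℕ) (f g : Lp ℝ 2 μ□) :
    blockAvg k (f - g) = blockAvg k f - blockAvg k g := by
  ext p
  rw [PiLp.sub_apply, blockAvg_apply, blockAvg_apply, blockAvg_apply,
    integral_congr_ae (cond_absolutelyContinuous.ae_le (Lp.coeFn_sub f g))]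
  exact integral_sub ((memLp_cond_dyadicSquare k p.1 p.2 f).integrable one_le_two)
    ((memLp_cond_dyadicSquare k p.1 p.2 g).integrable one_le_two)

lemma inv_two_pow_mul_norm_blockAvg_le (k : ℕ) (f : Lp ℝ 2 μ□) :
    (2 ^ k)⁻¹ * ‖blockAvg k f‖ ≤ ‖f‖ := by
  have hvar : 0 ≤ (4 ^ k)⁻¹ * ∑ p : Fin (2 ^ k) × Fin (2 ^ k),
      Var[f; μ□[|dyadicSquare k p.1 p.2]] :=
    mul_nonneg (by positivity) (Finset.sum_nonneg fun p _ => variance_nonneg _ _)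
  refine (pow_le_pow_iff_left₀ (by positivity) (norm_nonneg f) two_ne_zero).1 ?_
  linarith [norm_sq_eq_norm_blockAvg_add_sum_variance k f]

lemma lipschitzWith_blockAvg (k : ℕ) : LipschitzWith (2 ^ k) (blockAvg k) := by
  refine LipschitzWith.of_dist_le_mul fun f g => ?_
  rw [dist_eq_norm, dist_eq_norm, ← blockAvg_sub, NNReal.coe_pow, NNReal.coe_ofNat,
    ← inv_mul_le_iff₀ (by positivity)]
  exact inv_two_pow_mul_norm_blockAvg_le k (f - g)

lemma lipschitzWith_inv_two_pow_mul_norm_blockAvg (k : ℕ) :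
    LipschitzWith 1 fun f : Lp ℝ 2 μ□ => (2 ^ k)⁻¹ * ‖blockAvg k f‖ := by
  refine LipschitzWith.of_dist_le_mul fun f g => ?_
  rw [Real.dist_eq, ← mul_sub, abs_mul, abs_of_pos (by positivity), NNReal.coe_one, one_mul,
    dist_eq_norm]
  calc (2 ^ k)⁻¹ * |‖blockAvg k f‖ - ‖blockAvg k g‖|
      ≤ (2 ^ k)⁻¹ * ‖blockAvg k (f - g)‖ := by
        rw [blockAvg_sub]; gcongr; exact abs_norm_sub_norm_le _ _
    _ ≤ ‖f - g‖ := inv_two_pow_mul_norm_blockAvg_le k (f - g)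

lemma variance_le_sq_of_ae_dist_le {Ω : Type*} [MeasurableSpace Ω] {ν : Measure Ω}
    [IsProbabilityMeasure ν] {X : Ω → ℝ} {c ε : ℝ} (hX : AEMeasurable X ν)
    (h : ∀ᵐ ω ∂ν, dist (X ω) c ≤ ε) : Var[X; ν] ≤ ε ^ 2 := by
  have hmem : ∀ᵐ ω ∂ν, X ω ∈ Icc (c - ε) (c + ε) := h.mono fun ω hω => by
    rw [Real.dist_eq, abs_le] at hω
    constructor <;> linarith
  convert variance_le_sq_of_bounded hmem hX using 2
  ring

lemma eventually_variance_cond_dyadicSquare_le {f : Lp ℝ 2 μ□} {g : ℝ × ℝ → ℝ}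
    (hfg : f =ᵐ[μ□] g) (hg : ContinuousOn g (Icc 0 1 ×ˢ Icc 0 1)) {ε : ℝ} (hε : 0 < ε) :
    ∀ᶠ k in atTop, ∀ p : Fin (2 ^ k) × Fin (2 ^ k), Var[f; μ□[|dyadicSquare k p.1 p.2]] ≤ ε := by
  have hsub (k : ℕ) (i j : Fin (2 ^ k)) : dyadicSquare k i j ⊆ Icc 0 1 ×ˢ Icc 0 1 :=
    (dyadicSquare_subset k i j).trans (prod_mono Ioc_subset_Icc_self Ioc_subset_Icc_self)
  obtain ⟨δ, hδ, hgδ⟩ := Metric.uniformContinuousOn_iff_le.1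
    ((isCompact_Icc.prod isCompact_Icc).uniformContinuousOn_of_continuous hg) (√ε)
    (Real.sqrt_pos.2 hε)
  have hsmall : Tendsto (fun k : ℕ => ((2 : ℝ) ^ k)⁻¹) atTop (𝓝 0) :=
    tendsto_inv_atTop_zero.comp (tendsto_pow_atTop_atTop_of_one_lt one_lt_two)
  filter_upwards [hsmall.eventually (gt_mem_nhds hδ)] with k hk p
  obtain ⟨x₀, hx₀⟩ := nonempty_of_measure_ne_zero
    (unitSquareMeasure_dyadicSquare_ne_zero k p.1 p.2)
  refine (Real.sq_sqrt hε.le).le.trans' <| variance_le_sq_of_ae_dist_le (c := g x₀)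
    (memLp_cond_dyadicSquare k p.1 p.2 f).aestronglyMeasurable.aemeasurable ?_
  filter_upwards [ae_cond_mem (measurableSet_dyadicSquare k p.1 p.2),
    cond_absolutelyContinuous.ae_le hfg] with x hx hfx
  rw [hfx]
  exact hgδ x (hsub k _ _ hx) x₀ (hsub k _ _ hx₀)
    ((dist_le_of_mem_dyadicSquare hx hx₀).trans hk.le)

lemma tendsto_sum_variance_cond_dyadicSquare {f : Lp ℝ 2 μ□} {g : ℝ × ℝ → ℝ}
    (hfg : f =ᵐ[μ□] g) (hg : ContinuousOn g (Icc 0 1 ×ˢ Icc 0 1)) :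
    Tendsto (fun k => (4 ^ k)⁻¹ * ∑ p : Fin (2 ^ k) × Fin (2 ^ k),
      Var[f; μ□[|dyadicSquare k p.1 p.2]]) atTop (𝓝 0) := by
  refine tendsto_order.2 ⟨fun a ha => Eventually.of_forall fun k => ha.trans_le <|
    mul_nonneg (by positivity) (Finset.sum_nonneg fun p _ => variance_nonneg _ _),
    fun a ha => ?_⟩
  filter_upwards [eventually_variance_cond_dyadicSquare_le hfg hg (half_pos ha)] with k hk
  calc (4 ^ k)⁻¹ * ∑ p : Fin (2 ^ k) × Fin (2 ^ k), Var[f; μ□[|dyadicSquare k p.1 p.2]]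
      ≤ (4 ^ k)⁻¹ * ∑ _p : Fin (2 ^ k) × Fin (2 ^ k), a / 2 := by
        gcongr with p; exact hk p
    _ = a / 2 := by
        rw [Finset.sum_const, Finset.card_univ, Fintype.card_prod, Fintype.card_fin, nsmul_eq_mul,
          ← mul_assoc, Nat.cast_mul, Nat.cast_pow, Nat.cast_ofNat, ← mul_pow]
        norm_num
    _ < a := half_lt_self ha

lemma tendsto_norm_blockAvg_of_ae_eq_continuousOn {f : Lp ℝ 2 μ□} {g : ℝ × ℝ → ℝ}
    (hfg : f =ᵐ[μ□] g) (hg : ContinuousOn g (Icc 0 1 ×ˢ Icc 0 1)) :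
    Tendsto (fun k => (2 ^ k)⁻¹ * ‖blockAvg k f‖) atTop (𝓝 ‖f‖) := by
  have hsq : Tendsto (fun k => ((2 ^ k)⁻¹ * ‖blockAvg k f‖) ^ 2) atTop (𝓝 (‖f‖ ^ 2)) := by
    have := tendsto_const_nhds (x := ‖f‖ ^ 2) |>.sub (tendsto_sum_variance_cond_dyadicSquare hfg hg)
    rw [sub_zero] at this
    refine this.congr fun k => ?_
    rw [norm_sq_eq_norm_blockAvg_add_sum_variance k f]
    ring
  have := hsq.sqrt
  rw [Real.sqrt_sq (norm_nonneg f)] at this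
  exact this.congr fun k => Real.sqrt_sq (by positivity)

lemma tendsto_norm_blockAvg (f : Lp ℝ 2 μ□) :
    Tendsto (fun k => (2 ^ k)⁻¹ * ‖blockAvg k f‖) atTop (𝓝 ‖f‖) := by
  have hclosed : IsClosed {f : Lp ℝ 2 μ□ |
      Tendsto (fun k => (2 ^ k)⁻¹ * ‖blockAvg k f‖) atTop (𝓝 ‖f‖)} :=
    (LipschitzWith.uniformEquicontinuous _ 1 lipschitzWith_inv_two_pow_mul_norm_blockAvg
      ).equicontinuous.isClosed_setOfPred_tendsto continuous_norm
  refine hclosed.closure_subset_iff.2 (fun f hf => ?_)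
    (Lp.boundedContinuousFunction_dense ℝ μ□ ENNReal.ofNat_ne_top f)
  obtain ⟨g, hg⟩ := Lp.mem_boundedContinuousFunction_iff.1 hf
  exact tendsto_norm_blockAvg_of_ae_eq_continuousOn
    (hg ▸ ContinuousMap.coeFn_toAEEqFun μ□ g.toContinuousMap) g.continuous.continuousOn

lemma eventually_le_iff_of_tendsto {ι α : Type*} [LinearOrder α] [TopologicalSpace α]
    [OrderTopology α] {l : Filter ι} {u : ι → α} {a b : α} (hu : Tendsto u l (𝓝 a))
    (hab : a ≠ b) : ∀ᶠ i in l, (u i ≤ b ↔ a ≤ b) := by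
  rcases hab.lt_or_gt with h | h
  · filter_upwards [hu.eventually (gt_mem_nhds h)] with i hi
    exact iff_of_true hi.le h.le
  · filter_upwards [hu.eventually (lt_mem_nhds h)] with i hi
    exact iff_of_false (not_le.2 hi) (not_le.2 h)

lemma blockAvg_mem_closedBall_iff (k : ℕ) (y z : Lp ℝ 2 μ□) (ρ : ℝ) :
    blockAvg k z ∈ Metric.closedBall (blockAvg k y) (√(2 ^ (2 * k)) * ρ)
      ↔ (2 ^ k)⁻¹ * ‖blockAvg k (z - y)‖ ≤ ρ := by
  rw [pow_mul', Real.sqrt_sq (by positivity), Metric.mem_closedBall, dist_eq_norm, ← blockAvg_sub,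
    inv_mul_le_iff₀ (by positivity)]

theorem stmt14_general
    [MeasurableSpace (Lp ℝ 2 unitSquareMeasure)] [BorelSpace (Lp ℝ 2 unitSquareMeasure)]
    (α : Measure (Lp ℝ 2 unitSquareMeasure)) [IsProbabilityMeasure α]
    (y : Lp ℝ 2 unitSquareMeasure) (ρ : ℝ)
    (hsphere : α {z | ‖z - y‖ = ρ} = 0) :
    Tendsto
      (fun k : ℕ => Measure.map (blockAvg k) α
        (Metric.closedBall (blockAvg k y) (Real.sqrt (2 ^ (2 * k)) * ρ)))
      atTop (nhds (α (Metric.closedBall y ρ))) := by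
  have hmeas (k : ℕ) : Measurable (blockAvg k) := (lipschitzWith_blockAvg k).continuous.measurable
  refine (tendsto_measure_of_ae_tendsto_indicator_of_isFiniteMeasure atTop
    measurableSet_closedBall (fun k => hmeas k measurableSet_closedBall) ?_).congr
    fun k => (Measure.map_apply (hmeas k) measurableSet_closedBall).symm
  filter_upwards [measure_eq_zero_iff_ae_notMem.1 hsphere] with z hz
  filter_upwards [eventually_le_iff_of_tendsto (tendsto_norm_blockAvg (z - y)) hz] with k hk
  rw [mem_preimage, blockAvg_mem_closedBall_iff, hk, Metric.mem_closedBall, dist_eq_norm]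

/-- Equation (e:bilder) of the paper: the mass that the discretised laws assign to the
blown-up Euclidean balls converges to the `L²`-mass of the original ball, provided the
boundary sphere carries no mass. -/
theorem stmt14
    [MeasurableSpace (Lp ℝ 2 unitSquareMeasure)] [BorelSpace (Lp ℝ 2 unitSquareMeasure)]
    (α : Measure (Lp ℝ 2 unitSquareMeasure)) [IsProbabilityMeasure α]
    (y : Lp ℝ 2 unitSquareMeasure) (ρ : ℝ) (hρ : 0 < ρ)
    (hsphere : α {z | ‖z - y‖ = ρ} = 0) :
    Tendsto
      (fun k : ℕ => Measure.map (blockAvg k) α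
        (Metric.closedBall (blockAvg k y) (Real.sqrt (2 ^ (2 * k)) * ρ)))
      atTop (nhds (α (Metric.closedBall y ρ))) :=
  stmt14_general α y ρ hsphere
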